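/- Each linear equivalence class of configurations contains exactly one critical configuration. -/

import Mathlib

/-- A finite directed multigraph without loops on `Fin (n+1)` with global sink `Fin.last n`. -/
structure SinkDigraph (n : ℕ) where
  e : Fin (n + 1) → Fin (n + 1) → ℕ
  loopless : ∀ i, e i i = 0
  sink_no_out : ∀ j, e (Fin.last n) j = 0
  path_to_sink : ∀ i, Relation.ReflTransGen (fun u v => 0 < e u v) i (Fin.last n)

namespace SinkDigraph

variable {n : ℕ}

/-- Out-degree of a vertex. -/
def outDeg (G : SinkDigraph n) (i : Fin (n + 1)) : ℕ := ∑ j, G.e i j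

/-- The (full) Laplacian matrix over ℤ. -/
def lap (G : SinkDigraph n) : Matrix (Fin (n + 1)) (Fin (n + 1)) ℤ :=
  Matrix.of fun i j => if i = j then (G.outDeg i : ℤ) else -(G.e i j : ℤ)

/-- The reduced Laplacian (rows/columns of the sink removed). -/
def redLap (G : SinkDigraph n) : Matrix (Fin n) (Fin n) ℤ :=
  Matrix.of fun i j => G.lap i.castSucc j.castSucc

/-- The reduced Laplacian over ℚ. -/
def redLapQ (G : SinkDigraph n) : Matrix (Fin n) (Fin n) ℚ :=
  (G.redLap).map (Int.cast : ℤ → ℚ)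

/-- A ℕ-script viewed as integer vector. -/
def natScript (σ : Fin n → ℕ) : Fin n → ℤ := fun i => (σ i : ℤ)

/-- Result of firing vertex `i` in configuration `a`. -/
def fire (G : SinkDigraph n) (a : Fin n → ℤ) (i : Fin n) : Fin n → ℤ :=
  fun j => a j - G.redLap i j

/-- Result of firing a sequence of vertices. -/
def applySeq (G : SinkDigraph n) : (Fin n → ℤ) → List (Fin n) → (Fin n → ℤ)
  | a, [] => a
  | a, i :: s => G.applySeq (G.fire a i) s

/-- A firing sequence is legal from `a` if every fired vertex is active when fired. -/
def Legal (G : SinkDigraph n) : (Fin n → ℤ) → List (Fin n) → Prop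
  | _, [] => True
  | a, i :: s => G.redLap i i ≤ a i ∧ G.Legal (G.fire a i) s

/-- The firing script of a firing sequence. -/
def script (s : List (Fin n)) : Fin n → ℤ := fun i => (s.count i : ℤ)

/-- A configuration is stable if it is non-negative and no vertex is active. -/
def IsStable (G : SinkDigraph n) (a : Fin n → ℤ) : Prop :=
  ∀ i, 0 ≤ a i ∧ a i < G.redLap i i

/-- `b` is the stabilization of `a`. -/
def Stabilizes (G : SinkDigraph n) (a b : Fin n → ℤ) : Prop :=
  ∃ s : List (Fin n), G.Legal a s ∧ G.applySeq a s = b ∧ G.IsStable b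

/-- The maximal stable configuration `c_max`. -/
def cmax (G : SinkDigraph n) : Fin n → ℤ := fun i => (G.outDeg i.castSucc : ℤ) - 1

/-- A stable configuration is critical if it is the stabilization of `c_max + c`
for some non-negative `c`. -/
def IsCritical (G : SinkDigraph n) (a : Fin n → ℤ) : Prop :=
  ∃ c : Fin n → ℤ, 0 ≤ c ∧ G.Stabilizes (G.cmax + c) a

/-- `σΔ ≻ 0`, i.e. `σΔ` is non-negative and non-zero. -/
def GPositive (G : SinkDigraph n) (σ : Fin n → ℕ) : Prop :=
  0 ≤ Matrix.vecMul (natScript σ) G.redLap ∧ Matrix.vecMul (natScript σ) G.redLap ≠ 0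

/-- Reachability along directed edges. -/
def Reach (G : SinkDigraph n) : Fin (n + 1) → Fin (n + 1) → Prop :=
  Relation.ReflTransGen (fun u v => 0 < G.e u v)

/-- A source component: a strongly connected component with no in-going edge from outside. -/
def IsSourceComponent (G : SinkDigraph n) (S : Set (Fin (n + 1))) : Prop :=
  (∃ i, S = {j | G.Reach i j ∧ G.Reach j i}) ∧ ∀ j ∉ S, ∀ k ∈ S, G.e j k = 0

/-- A `G`-strongly positive script. -/
def GStronglyPositive (G : SinkDigraph n) (σ : Fin n → ℕ) : Prop :=
  G.GPositive σ ∧ ∀ S : Set (Fin (n + 1)), G.IsSourceComponent S →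
    ∃ i : Fin n, i.castSucc ∈ S ∧ Matrix.vecMul (natScript σ) G.redLap i ≠ 0

/-- Linear equivalence of configurations. -/
def Equiv (G : SinkDigraph n) (a b : Fin n → ℤ) : Prop :=
  ∃ σ : Fin n → ℤ, b - a = Matrix.vecMul σ G.redLap

/-- The weight of a configuration. -/
def weight (a : Fin n → ℤ) : ℤ := ∑ i, a i

/-- The energy (CFG) order: compare energy vectors `aΔ⁻¹` componentwise over ℚ. -/
def cfgLE (G : SinkDigraph n) (a b : Fin n → ℤ) : Prop :=
  Matrix.vecMul (fun i => (a i : ℚ)) (G.redLapQ)⁻¹ ≤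
    Matrix.vecMul (fun i => (b i : ℚ)) (G.redLapQ)⁻¹

/-- A non-negative configuration is superstable if reverse-firing any nonzero ℕ-script
produces a negative component. -/
def IsSuperstable (G : SinkDigraph n) (a : Fin n → ℤ) : Prop :=
  0 ≤ a ∧ ∀ σ : Fin n → ℕ, σ ≠ 0 →
    ∃ i, a i - Matrix.vecMul (natScript σ) G.redLap i < 0

end SinkDigraph

/-! The reduced Laplacian `Δ` of a digraph with a global sink satisfies a minimum principle
(`Δ x ≥ 0 ⇒ x ≥ 0`), so it is invertible with `Δ⁻¹ ≥ 0`. Hence every class contains a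
configuration `≥ c_max`, and its stabilization is critical and in the same class. For uniqueness,
the least action principle shows that `c_max - b` is superstable whenever `b` is critical, and two
equivalent superstables coincide: splitting the difference script into positive and negative
parts with disjoint supports, neither part can drive any vertex negative. -/

namespace SinkDigraph

open Matrix Finset

variable {n : ℕ}

lemma natScript_nonneg (σ : Fin n → ℕ) : 0 ≤ natScript σ := fun i => Int.natCast_nonneg (σ i)

lemma script_nil : script ([] : List (Fin n)) = 0 := by
  funext i
  simp [script]

lemma script_cons (i : Fin n) (s : List (Fin n)) :
    script (i :: s) = Pi.single i 1 + script s := by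
  funext j
  rcases eq_or_ne j i with rfl | h
  · simp [script, add_comm]
  · simp [script, h, h.symm]

lemma sum_script (s : List (Fin n)) : ∑ i, script s i = s.length := by
  have := Multiset.sum_count_eq_card (s := univ) (m := (s : Multiset (Fin n))) fun i _ => mem_univ i
  simp only [Multiset.coe_count, Multiset.coe_card] at this
  simp only [script]
  exact_mod_cast this

variable (G : SinkDigraph n)

lemma redLap_apply (i j : Fin n) :
    G.redLap i j =
      (if i = j then (G.outDeg i.castSucc : ℤ) else 0) - G.e i.castSucc j.castSucc := by
  by_cases h : i = j
  · subst h
    simp only [redLap, lap, of_apply, if_true, G.loopless, Nat.cast_zero, sub_zero]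
  · simp [redLap, lap, h]

lemma redLap_nonpos_of_ne {i j : Fin n} (h : i ≠ j) : G.redLap i j ≤ 0 := by
  simp [G.redLap_apply, h]

lemma cmax_apply (i : Fin n) : G.cmax i = G.redLap i i - 1 := by
  simp [cmax, G.redLap_apply, G.loopless]

lemma cmax_nonneg : 0 ≤ G.cmax := fun i => by
  obtain h | ⟨j, hj, -⟩ := (G.path_to_sink i.castSucc).cases_head
  · exact absurd h (Fin.castSucc_lt_last i).ne
  · have : G.e i.castSucc j ≤ G.outDeg i.castSucc :=
      single_le_sum (f := G.e i.castSucc) (fun _ _ => Nat.zero_le _) (mem_univ j)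
    simp only [cmax, Pi.zero_apply]
    omega

lemma redLap_mulVec_apply (x : Fin n → ℤ) (u : Fin n) :
    (G.redLap *ᵥ x) u = ∑ v, (G.e u.castSucc v : ℤ) *
      (Fin.snoc (α := fun _ => ℤ) x 0 u.castSucc - Fin.snoc (α := fun _ => ℤ) x 0 v) := by
  simp only [mulVec, dotProduct, G.redLap_apply, sub_mul, ite_mul, zero_mul, sum_sub_distrib,
    sum_ite_eq, mem_univ, if_true, mul_sub, Fin.sum_univ_castSucc, Fin.snoc_castSucc,
    Fin.snoc_last, mul_zero, outDeg, Nat.cast_sum, sum_mul, Nat.cast_add, add_mul]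
  ring

/-- Minimum principle: the minimum of `x`, extended by `0` at the sink, propagates along edges
and hence reaches the sink. -/
lemma nonneg_of_redLap_mulVec_nonneg {x : Fin n → ℤ} (h : 0 ≤ G.redLap *ᵥ x) : 0 ≤ x := by
  set x' : Fin (n + 1) → ℤ := Fin.snoc (α := fun _ => ℤ) x 0 with hx'
  obtain ⟨m, -, hm⟩ := exists_min_image univ x' univ_nonempty
  have closed : ∀ v w, x' v = x' m → 0 < G.e v w → x' w = x' m := by
    intro v w hv hvw
    induction v using Fin.lastCases with
    | last => exact absurd hvw (by simp [G.sink_no_out])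
    | cast u =>
      have hterms : ∀ w ∈ univ, (G.e u.castSucc w : ℤ) * (x' u.castSucc - x' w) ≤ 0 :=
        fun w _ => mul_nonpos_of_nonneg_of_nonpos (by positivity)
          (by rw [hv]; exact sub_nonpos.mpr (hm w (mem_univ w)))
      have hsum : ∑ w, (G.e u.castSucc w : ℤ) * (x' u.castSucc - x' w) = 0 :=
        le_antisymm (sum_nonpos hterms) (G.redLap_mulVec_apply x u ▸ h u)
      have hw := (sum_eq_zero_iff_of_nonpos hterms).mp hsum w (mem_univ w)
      rcases mul_eq_zero.mp hw with hw | hw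
      · exact absurd hw (by exact_mod_cast hvw.ne')
      · rw [← hv]; exact (sub_eq_zero.mp hw).symm
  have reach : ∀ w, G.Reach m w → x' w = x' m := fun w hw => by
    induction hw with
    | refl => rfl
    | tail _ hvw ih => exact closed _ _ ih hvw
  intro i
  have := hm i.castSucc (mem_univ _)
  rwa [← reach _ (G.path_to_sink m), hx', Fin.snoc_last, Fin.snoc_castSucc] at this

lemma det_redLap_ne_zero : G.redLap.det ≠ 0 := by
  rw [Ne, ← exists_mulVec_eq_zero_iff]
  rintro ⟨x, hx0, hx⟩
  have hpos : 0 ≤ x := G.nonneg_of_redLap_mulVec_nonneg (by rw [hx])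
  have hneg : 0 ≤ -x := G.nonneg_of_redLap_mulVec_nonneg (by rw [mulVec_neg, hx, neg_zero])
  exact hx0 (le_antisymm (neg_nonneg.mp hneg) hpos)

lemma det_mul_adjugate_redLap_nonneg (i j : Fin n) :
    0 ≤ G.redLap.det * G.redLap.adjugate i j := by
  have hΔ : G.redLap *ᵥ (G.redLap.adjugate *ᵥ Pi.single j G.redLap.det)
      = Pi.single j (G.redLap.det * G.redLap.det) := by
    rw [mulVec_mulVec, mul_adjugate, smul_mulVec, one_mulVec, ← Pi.single_smul', smul_eq_mul]
  have := G.nonneg_of_redLap_mulVec_nonneg (hΔ ▸ Pi.single_nonneg.mpr (mul_self_nonneg _)) i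
  simpa [mulVec_single, mul_comm] using this

/-- `Δ` is inverse-positive; over `ℤ` this is phrased through `det Δ • adj Δ = (det Δ)² Δ⁻¹ ≥ 0`. -/
lemma le_of_vecMul_redLap_le {σ τ : Fin n → ℤ} (h : σ ᵥ* G.redLap ≤ τ ᵥ* G.redLap) :
    σ ≤ τ := by
  set d := G.redLap.det
  intro i
  set w := (τ - σ) ᵥ* G.redLap with hw_def
  have hw : 0 ≤ w := by rw [hw_def, sub_vecMul]; exact sub_nonneg.mpr h
  have hadj : w ᵥ* G.redLap.adjugate = d • (τ - σ) := by
    rw [vecMul_vecMul, mul_adjugate, vecMul_smul, vecMul_one]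
  have hnonneg : 0 ≤ d * d * (τ i - σ i) :=
    calc 0 ≤ ∑ j, w j * (d * G.redLap.adjugate j i) :=
          sum_nonneg fun j _ => mul_nonneg (hw j) (G.det_mul_adjugate_redLap_nonneg j i)
      _ = d * (w ᵥ* G.redLap.adjugate) i := by
          simp only [vecMul, dotProduct, mul_sum, mul_left_comm d]
      _ = d * d * (τ i - σ i) := by
          rw [hadj, Pi.smul_apply, Pi.sub_apply, smul_eq_mul, mul_assoc]
  have := (mul_nonneg_iff_of_pos_left (mul_self_pos.mpr G.det_redLap_ne_zero)).mp hnonneg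
  linarith

/-- The script `(k det Δ, …, k det Δ) · adj Δ` fires `k (det Δ)² ≥ k` chips into every vertex. -/
lemma exists_le_vecMul_redLap (v : Fin n → ℤ) :
    ∃ σ : Fin n → ℤ, 0 ≤ σ ∧ v ≤ σ ᵥ* G.redLap := by
  set d := G.redLap.det
  set k := ∑ i, |v i|
  have hk : 0 ≤ k := sum_nonneg fun i _ => abs_nonneg (v i)
  have hd : 1 ≤ d * d := by
    rw [← abs_mul_abs_self]
    exact one_le_mul_of_one_le_of_one_le (Int.one_le_abs G.det_redLap_ne_zero)
      (Int.one_le_abs G.det_redLap_ne_zero)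
  have hfire : (fun _ => k * d) ᵥ* G.redLap.adjugate ᵥ* G.redLap = fun _ => k * (d * d) := by
    rw [vecMul_vecMul, adjugate_mul, vecMul_smul, vecMul_one]
    funext j
    simp only [Pi.smul_apply, smul_eq_mul]
    ring
  have hvk : ∀ j, v j ≤ k * (d * d) := fun j =>
    calc v j ≤ |v j| := le_abs_self _
      _ ≤ k := single_le_sum (f := fun i => |v i|) (fun i _ => abs_nonneg _) (mem_univ j)
      _ ≤ k * (d * d) := le_mul_of_one_le_right hk hd
  refine ⟨(fun _ => k * d) ᵥ* G.redLap.adjugate, G.le_of_vecMul_redLap_le ?_, ?_⟩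
  · rw [zero_vecMul, hfire]
    exact fun _ => mul_nonneg hk (mul_self_nonneg d)
  · rw [hfire]
    exact hvk

lemma fire_eq (a : Fin n → ℤ) (i : Fin n) : G.fire a i = a - Pi.single i 1 ᵥ* G.redLap := by
  funext j
  simp [fire]

lemma applySeq_eq (a : Fin n → ℤ) (s : List (Fin n)) :
    G.applySeq a s = a - script s ᵥ* G.redLap := by
  induction s generalizing a with
  | nil => simp [applySeq, script_nil]
  | cons i s ih =>
    rw [applySeq, ih, fire_eq, script_cons, add_vecMul]
    abel

lemma fire_nonneg {a : Fin n → ℤ} (ha : 0 ≤ a) {i : Fin n} (hi : G.redLap i i ≤ a i) :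
    0 ≤ G.fire a i := fun j => by
  rcases eq_or_ne i j with rfl | h
  · exact sub_nonneg.mpr hi
  · exact sub_nonneg.mpr ((G.redLap_nonpos_of_ne h).trans (ha j))

lemma vecMul_redLap_nonpos_of_eq_zero {τ : Fin n → ℤ} (hτ : 0 ≤ τ) {i : Fin n} (hi : τ i = 0) :
    (τ ᵥ* G.redLap) i ≤ 0 := by
  simp only [vecMul, dotProduct]
  refine sum_nonpos fun j _ => ?_
  rcases eq_or_ne j i with rfl | h
  · simp [hi]
  · exact mul_nonpos_of_nonneg_of_nonpos (hτ j) (G.redLap_nonpos_of_ne h)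

variable {G}

lemma Equiv.symm {a b : Fin n → ℤ} (h : G.Equiv a b) : G.Equiv b a := by
  obtain ⟨σ, hσ⟩ := h
  exact ⟨-σ, by rw [neg_vecMul, ← hσ, neg_sub]⟩

lemma Equiv.trans {a b c : Fin n → ℤ} (hab : G.Equiv a b) (hbc : G.Equiv b c) : G.Equiv a c := by
  obtain ⟨σ, hσ⟩ := hab
  obtain ⟨τ, hτ⟩ := hbc
  exact ⟨σ + τ, by rw [add_vecMul, ← hσ, ← hτ]; abel⟩

lemma Stabilizes.equiv {a b : Fin n → ℤ} (h : G.Stabilizes a b) : G.Equiv a b := by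
  obtain ⟨s, -, rfl, -⟩ := h
  exact ⟨-script s, by rw [applySeq_eq, neg_vecMul]; abel⟩

lemma IsStable.le_cmax {b : Fin n → ℤ} (hb : G.IsStable b) : b ≤ G.cmax := fun i => by
  rw [G.cmax_apply]
  linarith [(hb i).2]

/-- Least action principle. -/
lemma Legal.script_le {a : Fin n → ℤ} {s : List (Fin n)} (hs : G.Legal a s) {σ : Fin n → ℤ}
    (hσ : 0 ≤ σ) (hle : a - σ ᵥ* G.redLap ≤ G.cmax) : script s ≤ σ := by
  induction s generalizing a σ with
  | nil => rwa [script_nil]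
  | cons k s ih =>
    obtain ⟨hk, hs⟩ := hs
    have hσk : σ k ≠ 0 := fun h0 => by
      have := G.vecMul_redLap_nonpos_of_eq_zero hσ h0
      have := hle k
      simp only [Pi.sub_apply, G.cmax_apply] at this
      omega
    have hσ' : 0 ≤ σ - Pi.single k 1 := fun j => by
      rcases eq_or_ne j k with rfl | h
      · have : 0 ≤ σ j := hσ j
        simp only [Pi.sub_apply, Pi.single_eq_same, Pi.zero_apply]
        omega
      · simpa [h] using hσ j
    have hle' : G.fire a k - (σ - Pi.single k 1) ᵥ* G.redLap ≤ G.cmax := by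
      rwa [fire_eq, sub_vecMul, sub_sub_sub_cancel_right]
    rw [script_cons]
    exact le_sub_iff_add_le'.mp (ih hs hσ' hle')

variable (G)

lemma exists_legal_length_le (a : Fin n → ℤ) :
    ∃ N : ℕ, ∀ s, G.Legal a s → s.length ≤ N := by
  obtain ⟨σ, hσ, hle⟩ := G.exists_le_vecMul_redLap (a - G.cmax)
  refine ⟨(∑ i, σ i).toNat, fun s hs => ?_⟩
  have hscript := hs.script_le hσ (sub_le_comm.mp hle)
  have : (s.length : ℤ) ≤ ∑ i, σ i := by
    rw [← sum_script]
    exact sum_le_sum fun i _ => hscript i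
  omega

lemma exists_stabilizes_of_legal_length_le (N : ℕ) {a : Fin n → ℤ} (ha : 0 ≤ a)
    (hN : ∀ s, G.Legal a s → s.length ≤ N) : ∃ b, G.Stabilizes a b := by
  induction N generalizing a with
  | zero =>
    refine ⟨a, [], trivial, rfl, fun i => ⟨ha i, ?_⟩⟩
    by_contra! hi
    simpa using hN [i] ⟨hi, trivial⟩
  | succ N ih =>
    by_cases hst : G.IsStable a
    · exact ⟨a, [], trivial, rfl, hst⟩
    obtain ⟨i, hi⟩ : ∃ i, G.redLap i i ≤ a i := by
      simp only [IsStable, not_forall, not_and, not_lt] at hst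
      obtain ⟨i, hi⟩ := hst
      exact ⟨i, hi (ha i)⟩
    obtain ⟨b, s, hs, hsb, hb⟩ :=
      ih (G.fire_nonneg ha hi) fun s hs => by simpa using hN (i :: s) ⟨hi, hs⟩
    exact ⟨b, i :: s, ⟨hi, hs⟩, hsb, hb⟩

lemma exists_stabilizes {a : Fin n → ℤ} (ha : 0 ≤ a) : ∃ b, G.Stabilizes a b :=
  (G.exists_legal_length_le a).elim fun N hN => G.exists_stabilizes_of_legal_length_le N ha hN

lemma exists_equiv_isCritical (a : Fin n → ℤ) : ∃ b, G.Equiv a b ∧ G.IsCritical b := by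
  obtain ⟨σ, -, hσ⟩ := G.exists_le_vecMul_redLap (G.cmax - a)
  have hy : G.cmax ≤ a + σ ᵥ* G.redLap := sub_le_iff_le_add'.mp hσ
  obtain ⟨b, hb⟩ := G.exists_stabilizes (G.cmax_nonneg.trans hy)
  refine ⟨b, Equiv.trans ⟨σ, add_sub_cancel_left _ _⟩ hb.equiv, _, sub_nonneg.mpr hy, ?_⟩
  rwa [add_sub_cancel]

variable {G}

lemma IsCritical.isSuperstable_cmax_sub {b : Fin n → ℤ} (hb : G.IsCritical b) :
    G.IsSuperstable (G.cmax - b) := by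
  obtain ⟨c, hc, s, hs, hsb, hb⟩ := hb
  have hτ : script s ᵥ* G.redLap = G.cmax + c - b := by rw [← hsb, applySeq_eq]; abel
  refine ⟨sub_nonneg.mpr hb.le_cmax, fun σ hσ0 => ?_⟩
  by_contra! hσ
  have hσb : natScript σ ᵥ* G.redLap ≤ G.cmax - b := fun i => by
    have := hσ i
    simp only [Pi.sub_apply] at this ⊢
    linarith
  have hστ : natScript σ ≤ script s := G.le_of_vecMul_redLap_le fun i => by
    have := hσb i
    have := hc i
    simp only [hτ, Pi.add_apply, Pi.sub_apply, Pi.zero_apply] at *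
    linarith
  have hle := hs.script_le (sub_nonneg.mpr hστ) <| by
    rw [sub_vecMul, hτ, show G.cmax + c - (G.cmax + c - b - natScript σ ᵥ* G.redLap)
      = b + natScript σ ᵥ* G.redLap by abel]
    exact le_sub_iff_add_le'.mp hσb
  refine hσ0 (funext fun i => ?_)
  have := hle i
  simp only [natScript, Pi.sub_apply] at this
  simp only [Pi.zero_apply]
  omega

/-- A vertex driven negative by `σ` must be fired by `τ`, hence not by `σ`, so it is not
negative after all. -/
lemma IsSuperstable.eq_zero_of_sub_vecMul_eq {s t : Fin n → ℤ} (hs : G.IsSuperstable s)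
    (ht : 0 ≤ t) {σ τ : Fin n → ℕ} (hστ : ∀ i, σ i = 0 ∨ τ i = 0)
    (h : s - natScript σ ᵥ* G.redLap = t - natScript τ ᵥ* G.redLap) : σ = 0 := by
  by_contra hσ
  obtain ⟨i, hi⟩ := hs.2 σ hσ
  have hsi : 0 ≤ s i := hs.1 i
  have hti : 0 ≤ t i := ht i
  have hi' := congrFun h i
  simp only [Pi.sub_apply] at hi'
  rcases hστ i with h0 | h0
  · have := G.vecMul_redLap_nonpos_of_eq_zero (natScript_nonneg σ) (i := i)
      (by simp [natScript, h0])
    omega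
  · have := G.vecMul_redLap_nonpos_of_eq_zero (natScript_nonneg τ) (i := i)
      (by simp [natScript, h0])
    omega

lemma IsSuperstable.eq_of_equiv {s t : Fin n → ℤ} (hs : G.IsSuperstable s)
    (ht : G.IsSuperstable t) (h : G.Equiv s t) : s = t := by
  obtain ⟨σ, hσ⟩ := h
  set σp : Fin n → ℕ := fun i => (σ i).toNat
  set σm : Fin n → ℕ := fun i => (-σ i).toNat
  have hsplit : σ = natScript σp - natScript σm := by
    funext i
    simp only [natScript, σp, σm, Pi.sub_apply]
    omega
  have hdisj : ∀ i, σp i = 0 ∨ σm i = 0 := fun i => by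
    simp only [σp, σm]
    omega
  have heq : t - natScript σp ᵥ* G.redLap = s - natScript σm ᵥ* G.redLap := by
    rw [hsplit, sub_vecMul] at hσ
    linear_combination hσ
  have hp := ht.eq_zero_of_sub_vecMul_eq hs.1 hdisj heq
  have hm := hs.eq_zero_of_sub_vecMul_eq ht.1 (fun i => (hdisj i).symm) heq.symm
  rw [hsplit, hp, hm, sub_self, zero_vecMul] at hσ
  exact (sub_eq_zero.mp hσ).symm

lemma IsCritical.eq_of_equiv {b b' : Fin n → ℤ} (hb : G.IsCritical b) (hb' : G.IsCritical b')
    (h : G.Equiv b b') : b = b' := by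
  obtain ⟨σ, hσ⟩ := h
  have := hb'.isSuperstable_cmax_sub.eq_of_equiv hb.isSuperstable_cmax_sub ⟨σ, by rw [← hσ]; abel⟩
  exact (sub_right_inj.mp this).symm

end SinkDigraph

open SinkDigraph Matrix

theorem unique_critical_in_class (n : ℕ) (G : SinkDigraph n) (a : Fin n → ℤ) :
    ∃! b : Fin n → ℤ, G.Equiv a b ∧ G.IsCritical b := by
  obtain ⟨b, hab, hb⟩ := G.exists_equiv_isCritical a
  exact ⟨b, ⟨hab, hb⟩, fun b' ⟨hab', hb'⟩ => hb'.eq_of_equiv hb (hab'.symm.trans hab)⟩
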